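/- arXiv:2010.06348 — 2 statements merged into one kernel-verified Lean document; each statement's English description precedes it below -/
import Mathlib

section
/- Fix ε ∈ (0,1) and c ∈ (0, ε·R_min²/σ), and let t0 < t1 with 0 < t1 − t0 < σ. Set u := (R(t0)² + √(R(t0)²R(t1)² − c²(t1−t0)²))/(R(t0)·(t1−t0)). Then 2R'(t0) + u > max{0, R'(t0)}; in particular, of the two roots R'(t0) ± (R'(t0)+u) of the pre- /post-impact radial velocity equation, only the root −u is smaller than min{0, R'(t0)} and can represent the radial velocity of a particle leaving the moving boundary. -/
/-!
Since `R(t0) ≥ R_min` and `t1 − t0 < σ ≤ R_min / (2‖R'‖)`, the quantity `u` is at least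
`R(t0)/(t1 − t0) > 2‖R'‖ ≥ 2|R'(t0)|`, and both inequalities follow from `u > 2|R'(t0)|`.
-/

noncomputable section

/-- Sup-norm of a function (for a continuous 1-periodic function this is the maximum of `|f|`). -/
def supNorm (f : ℝ → ℝ) : ℝ := sSup (Set.range fun t => |f t|)

/-- Minimum value of `R` (attained for a continuous 1-periodic `R`). -/
def Rmin (R : ℝ → ℝ) : ℝ := sInf (Set.range R)

/-- Maximum value of `R` (attained for a continuous 1-periodic `R`). -/
def Rmax (R : ℝ → ℝ) : ℝ := sSup (Set.range R)

/-- The constant `σ = min { R_min/(2‖R'‖) , 2√(1+√(1−ε²))·R_min/√‖(R²)''‖ }`. -/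
def sigmaR (R : ℝ → ℝ) (ε : ℝ) : ℝ :=
  min (Rmin R / (2 * supNorm (deriv R)))
    (2 * Real.sqrt (1 + Real.sqrt (1 - ε ^ 2)) * Rmin R /
      Real.sqrt (supNorm (deriv (deriv (fun t => R t ^ 2)))))

/-- `√(R(t0)²R(t1)² − c²(t1−t0)²)`. -/
def Ssq (R : ℝ → ℝ) (c t0 t1 : ℝ) : ℝ :=
  Real.sqrt (R t0 ^ 2 * R t1 ^ 2 - c ^ 2 * (t1 - t0) ^ 2)

/-- `A(t0,t1) = (R(t0)² + R(t1)² + 2√(R(t0)²R(t1)² − c²(t1−t0)²))/(t1−t0)²`. -/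
def Afun (R : ℝ → ℝ) (c t0 t1 : ℝ) : ℝ :=
  (R t0 ^ 2 + R t1 ^ 2 + 2 * Ssq R c t0 t1) / (t1 - t0) ^ 2

/-- `B = −( t0 + (R(t0)² + √(R(t0)²R(t1)² − c²(t1−t0)²))/((t1−t0)·A) )`. -/
def Bfun (R : ℝ → ℝ) (c t0 t1 : ℝ) : ℝ :=
  -(t0 + (R t0 ^ 2 + Ssq R c t0 t1) / ((t1 - t0) * Afun R c t0 t1))

/-- The Dirichlet solution `r(t) = √((A²(t+B)² + c²)/A)`. -/
def dirich (R : ℝ → ℝ) (c t0 t1 t : ℝ) : ℝ :=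
  Real.sqrt ((Afun R c t0 t1 ^ 2 * (t + Bfun R c t0 t1) ^ 2 + c ^ 2) / Afun R c t0 t1)

/-- The generating function
`h(t0,t1) = ½(t1−t0)·A(t0,t1) + c·arctan( c(t1−t0)/√(R(t0)²R(t1)² − c²(t1−t0)²) )`. -/
def hgen (R : ℝ → ℝ) (c t0 t1 : ℝ) : ℝ :=
  (1 / 2) * (t1 - t0) * Afun R c t0 t1 +
    c * Real.arctan (c * (t1 - t0) / Ssq R c t0 t1)

/-- `∂₁h`, the partial derivative of `h` in its first argument. -/
def d1h (R : ℝ → ℝ) (c t0 t1 : ℝ) : ℝ := deriv (fun s => hgen R c s t1) t0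

/-- `∂₂h`, the partial derivative of `h` in its second argument. -/
def d2h (R : ℝ → ℝ) (c t0 t1 : ℝ) : ℝ := deriv (fun s => hgen R c t0 s) t1

/-- `∂₁₂h`, the mixed second partial derivative of `h`. -/
def d12h (R : ℝ → ℝ) (c t0 t1 : ℝ) : ℝ := deriv (fun s => d1h R c t0 s) t1

theorem supNorm_nonneg (f : ℝ → ℝ) : 0 ≤ supNorm f :=
  Real.sSup_nonneg (by rintro _ ⟨t, rfl⟩; exact abs_nonneg _)

theorem abs_le_supNorm {f : ℝ → ℝ} (hf : supNorm f ≠ 0) (t : ℝ) : |f t| ≤ supNorm f := by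
  refine le_csSup ?_ ⟨t, rfl⟩
  by_contra hbdd
  exact hf (Real.sSup_of_not_bddAbove hbdd)

theorem Rmin_le {R : ℝ → ℝ} (hR : Rmin R ≠ 0) (t : ℝ) : Rmin R ≤ R t := by
  refine csInf_le ?_ ⟨t, rfl⟩
  by_contra hbdd
  exact hR (Real.sInf_of_not_bddBelow hbdd)

/-- An unbounded `R` or `R'` has the junk value `Rmin R = 0` or `supNorm (deriv R) = 0`, which
forces `sigmaR R ε ≤ 0`; so `0 < τ < sigmaR R ε` makes both `Rmin_le` and `abs_le_supNorm` apply. -/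
theorem two_mul_abs_deriv_lt_of_lt_sigmaR {R : ℝ → ℝ} {ε τ : ℝ} (hτ : 0 < τ)
    (hσ : τ < sigmaR R ε) (t : ℝ) : 2 * |deriv R t| < R t / τ := by
  set N := supNorm (deriv R)
  have hτN : τ < Rmin R / (2 * N) := hσ.trans_le (min_le_left _ _)
  obtain ⟨hRmin, hN⟩ : 0 < Rmin R ∧ 0 < 2 * N :=
    (div_pos_iff.mp (hτ.trans hτN)).resolve_right
      fun h => by linarith [h.2, supNorm_nonneg (deriv R)]
  rw [lt_div_iff₀ hτ]
  calc 2 * |deriv R t| * τ ≤ 2 * N * τ := by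
        gcongr
        exact abs_le_supNorm (by linarith : 0 < N).ne' t
    _ < Rmin R := by rwa [lt_div_iff₀ hN, mul_comm] at hτN
    _ ≤ R t := Rmin_le hRmin.ne' t

theorem max_zero_lt_and_neg_lt_min_of_two_mul_abs_lt {d u : ℝ} (h : 2 * |d| < u) :
    max 0 d < 2 * d + u ∧ -u < min 0 d := by
  have hd₁ := neg_abs_le d
  have hd₂ := le_abs_self d
  exact ⟨max_lt (by linarith) (by linarith), lt_min (by linarith) (by linarith)⟩

theorem only_admissible_root_general (R : ℝ → ℝ) (ε c t0 t1 : ℝ)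
    (h1 : 0 < t1 - t0) (h2 : t1 - t0 < sigmaR R ε) :
    max 0 (deriv R t0) <
      2 * deriv R t0 + (R t0 ^ 2 + Ssq R c t0 t1) / (R t0 * (t1 - t0)) ∧
    -((R t0 ^ 2 + Ssq R c t0 t1) / (R t0 * (t1 - t0))) < min 0 (deriv R t0) := by
  apply max_zero_lt_and_neg_lt_min_of_two_mul_abs_lt
  have hkey := two_mul_abs_deriv_lt_of_lt_sigmaR h1 h2 t0
  have hR : 0 < R t0 :=
    (div_pos_iff_of_pos_right h1).mp ((by positivity : (0 : ℝ) ≤ 2 * |deriv R t0|).trans_lt hkey)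
  calc 2 * |deriv R t0| < R t0 / (t1 - t0) := hkey
    _ = R t0 ^ 2 / (R t0 * (t1 - t0)) := by field_simp
    _ ≤ (R t0 ^ 2 + Ssq R c t0 t1) / (R t0 * (t1 - t0)) := by
        gcongr
        exact le_add_of_nonneg_right (Real.sqrt_nonneg _)

/-- For `c ∈ (0, ε R_min²/σ)` and `0 < t1 − t0 < σ`, with
`u = (R(t0)² + √(R(t0)²R(t1)² − c²(t1−t0)²))/(R(t0)(t1−t0))` one has
`2R'(t0) + u > max{0, R'(t0)}`; in particular, of the two roots `R'(t0) ± (R'(t0)+u)` of the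
impact radial velocity equation, only the root `−u` is smaller than `min{0, R'(t0)}` and can
represent the radial velocity of a particle leaving the moving boundary. -/
theorem only_admissible_root (R : ℝ → ℝ) (ε c t0 t1 : ℝ)
    (hC : ContDiff ℝ 2 R) (hper : ∀ t, R (t + 1) = R t) (hpos : ∀ t, 0 < R t)
    (hnc : ∃ a b, R a ≠ R b)
    (hε : ε ∈ Set.Ioo (0 : ℝ) 1) (hσ : 0 < sigmaR R ε)
    (hc : c ∈ Set.Ioo 0 (ε * Rmin R ^ 2 / sigmaR R ε))
    (h1 : 0 < t1 - t0) (h2 : t1 - t0 < sigmaR R ε) :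
    max 0 (deriv R t0) <
      2 * deriv R t0 + (R t0 ^ 2 + Ssq R c t0 t1) / (R t0 * (t1 - t0)) ∧
    -((R t0 ^ 2 + Ssq R c t0 t1) / (R t0 * (t1 - t0))) < min 0 (deriv R t0) :=
  only_admissible_root_general R ε c t0 t1 h1 h2
end
end

section
/- Let c > 0 and t0 < t1 with c(t1−t0) < R(t0)R(t1). Then the partial derivative of the generating function h with respect to its second argument satisfies ∂h/∂t1 (t0,t1) = −c²/(2R(t1)²) + R'(t1)·w − ½w², where w := (R(t1)² + √(R(t0)²R(t1)² − c²(t1−t0)²)) / (R(t1)·(t1−t0)). -/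
noncomputable section

/-! Write `τ = t1 - t0` and `S = √(R(t0)² R(t1)² - c² τ²)`. Differentiating `S²` gives
`S S' = R(t0)² R(t1) R'(t1) - c² τ`, and with it the arctan term of `h`, which is
`arcsin (c τ / (R(t0) R(t1)))`, has derivative `c (R(t1) - τ R'(t1)) / (R(t1) S)`. Adding the
derivative of `½ τ A = (R(t0)² + R(t1)² + 2S) / (2τ)`, everything except `-½ A` combines into
`R'(t1) w`, and the same relation for `S²` gives `A = c² / R(t1)² + w²`. -/

open Real

variable {R : ℝ → ℝ} {c t0 t1 r' : ℝ}

lemma Ssq_sq (hP : 0 ≤ R t0 ^ 2 * R t1 ^ 2 - c ^ 2 * (t1 - t0) ^ 2) :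
    Ssq R c t0 t1 ^ 2 = R t0 ^ 2 * R t1 ^ 2 - c ^ 2 * (t1 - t0) ^ 2 :=
  sq_sqrt hP

lemma Ssq_pos (hP : 0 < R t0 ^ 2 * R t1 ^ 2 - c ^ 2 * (t1 - t0) ^ 2) : 0 < Ssq R c t0 t1 :=
  sqrt_pos.mpr hP

lemma ne_zero_of_Ssq_radicand_pos (hP : 0 < R t0 ^ 2 * R t1 ^ 2 - c ^ 2 * (t1 - t0) ^ 2) :
    R t1 ≠ 0 := by
  rintro h
  rw [h] at hP
  nlinarith [sq_nonneg (c * (t1 - t0))]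

lemma hasDerivAt_Ssq (hR : HasDerivAt R r' t1)
    (hP : 0 < R t0 ^ 2 * R t1 ^ 2 - c ^ 2 * (t1 - t0) ^ 2) :
    HasDerivAt (Ssq R c t0) ((R t0 ^ 2 * R t1 * r' - c ^ 2 * (t1 - t0)) / Ssq R c t0 t1) t1 := by
  have hrad : HasDerivAt (fun s => R t0 ^ 2 * R s ^ 2 - c ^ 2 * (s - t0) ^ 2)
      (2 * (R t0 ^ 2 * R t1 * r' - c ^ 2 * (t1 - t0))) t1 := by
    refine (((hR.fun_pow 2).const_mul (R t0 ^ 2)).fun_sub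
      ((((hasDerivAt_id' t1).sub_const t0).fun_pow 2).const_mul (c ^ 2))).congr_deriv ?_
    ring
  exact (hrad.sqrt hP.ne').congr_deriv (mul_div_mul_left _ _ two_ne_zero)

lemma hasDerivAt_arctan_div_Ssq (hR : HasDerivAt R r' t1)
    (hP : 0 < R t0 ^ 2 * R t1 ^ 2 - c ^ 2 * (t1 - t0) ^ 2) :
    HasDerivAt (fun s => arctan (c * (s - t0) / Ssq R c t0 s))
      (c * (R t1 - (t1 - t0) * r') / (R t1 * Ssq R c t0 t1)) t1 := by
  have hS := Ssq_pos hP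
  have hS2 := Ssq_sq hP.le
  have hr := ne_zero_of_Ssq_radicand_pos hP
  have hquot := (((hasDerivAt_id' t1).sub_const t0).const_mul c).fun_div (hasDerivAt_Ssq hR hP) hS.ne'
  refine hquot.arctan.congr_deriv ?_
  field_simp
  rw [hS2]
  ring

lemma hasDerivAt_hgen (hR : HasDerivAt R r' t1)
    (hP : 0 < R t0 ^ 2 * R t1 ^ 2 - c ^ 2 * (t1 - t0) ^ 2) (ht : t0 ≠ t1) :
    HasDerivAt (hgen R c t0)
      (r' * ((R t1 ^ 2 + Ssq R c t0 t1) / (R t1 * (t1 - t0))) - 1 / 2 * Afun R c t0 t1) t1 := by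
  have hS := Ssq_pos hP
  have hS2 := Ssq_sq hP.le
  have hr := ne_zero_of_Ssq_radicand_pos hP
  have hτ : t1 - t0 ≠ 0 := sub_ne_zero.mpr ht.symm
  have hlin := (hasDerivAt_id' t1).sub_const t0
  have hA : HasDerivAt (Afun R c t0) _ t1 :=
    (((hR.fun_pow 2).const_add (R t0 ^ 2)).fun_add ((hasDerivAt_Ssq hR hP).const_mul 2)).fun_div
      (hlin.fun_pow 2) (pow_ne_zero 2 hτ)
  refine (((hlin.const_mul (1 / 2)).fun_mul hA).fun_add
    ((hasDerivAt_arctan_div_Ssq hR hP).const_mul c)).congr_deriv ?_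
  simp only [Afun]
  field_simp
  linear_combination (-2 * (t1 - t0) ^ 2 * r') * hS2

lemma Afun_eq_div_add_sq (hP : 0 ≤ R t0 ^ 2 * R t1 ^ 2 - c ^ 2 * (t1 - t0) ^ 2)
    (hr : R t1 ≠ 0) (ht : t0 ≠ t1) :
    Afun R c t0 t1 =
      c ^ 2 / R t1 ^ 2 + ((R t1 ^ 2 + Ssq R c t0 t1) / (R t1 * (t1 - t0))) ^ 2 := by
  have hτ : t1 - t0 ≠ 0 := sub_ne_zero.mpr ht.symm
  rw [Afun]
  field_simp
  linear_combination (Ssq_sq hP).symm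

theorem d2h_formula_general (R : ℝ → ℝ) (c t0 t1 : ℝ)
    (hC : ContDiff ℝ 2 R)
    (hc : 0 < c) (ht : t0 < t1) (hlt : c * (t1 - t0) < R t0 * R t1) :
    d2h R c t0 t1 =
      -(c ^ 2 / (2 * R t1 ^ 2)) +
        deriv R t1 * ((R t1 ^ 2 + Ssq R c t0 t1) / (R t1 * (t1 - t0))) -
        (1 / 2) * ((R t1 ^ 2 + Ssq R c t0 t1) / (R t1 * (t1 - t0))) ^ 2 := by
  have hcτ : 0 < c * (t1 - t0) := mul_pos hc (sub_pos.mpr ht)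
  have hP : 0 < R t0 ^ 2 * R t1 ^ 2 - c ^ 2 * (t1 - t0) ^ 2 := by nlinarith
  have hR := (hC.differentiable two_ne_zero t1).hasDerivAt
  rw [d2h, (hasDerivAt_hgen hR hP ht.ne).deriv,
    Afun_eq_div_add_sq hP.le (ne_zero_of_Ssq_radicand_pos hP) ht.ne]
  ring

/-- For `c > 0` and `t0 < t1` with `c(t1−t0) < R(t0)R(t1)`, the partial
derivative of the generating function `h` in its second argument is
`∂₂h(t0,t1) = −c²/(2R(t1)²) + R'(t1)·w − ½w²`, with
`w = (R(t1)² + √(R(t0)²R(t1)² − c²(t1−t0)²))/(R(t1)(t1−t0))`. -/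
theorem d2h_formula (R : ℝ → ℝ) (c t0 t1 : ℝ)
    (hC : ContDiff ℝ 2 R) (hper : ∀ t, R (t + 1) = R t) (hpos : ∀ t, 0 < R t)
    (hnc : ∃ a b, R a ≠ R b)
    (hc : 0 < c) (ht : t0 < t1) (hlt : c * (t1 - t0) < R t0 * R t1) :
    d2h R c t0 t1 =
      -(c ^ 2 / (2 * R t1 ^ 2)) +
        deriv R t1 * ((R t1 ^ 2 + Ssq R c t0 t1) / (R t1 * (t1 - t0))) -
        (1 / 2) * ((R t1 ^ 2 + Ssq R c t0 t1) / (R t1 * (t1 - t0))) ^ 2 :=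
  d2h_formula_general R c t0 t1 hC hc ht hlt
end
end
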